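/- arXiv:2006.14009 — 4 statements merged into one kernel-verified Lean document; each statement's English description precedes it below -/
import Mathlib

section
/- The spread relation is transitive: if Z is a spread of Y and Y is a spread of X, then Z is a spread of X. -/
open MeasureTheory ProbabilityTheory

/-- `ν` is a spread of `μ`: there is a coupling `(X, Y)` with `X ~ μ`, `Y ~ ν`
and `E[Y | X] = X` almost surely. -/
def IsSpread {E : Type*} [NormedAddCommGroup E] [NormedSpace ℝ E] [CompleteSpace E]
    [MeasurableSpace E] [BorelSpace E] (ν μ : Measure E) : Prop :=
  ∃ (Ω : Type) (_ : MeasurableSpace Ω) (P : Measure Ω) (_ : IsProbabilityMeasure P)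
    (X Y : Ω → E), Measurable X ∧ Measurable Y ∧
      P.map X = μ ∧ P.map Y = ν ∧
      P[Y | MeasurableSpace.comap X inferInstance] =ᵐ[P] X

/-! Glue the two couplings along the middle law: given `(X, Y)` under `P` and `(Y', Z)` under `P'`
with `Y ~ Y'`, draw `ω ~ P` and then `z` from the conditional law of `Z` given `Y' = Y ω`. The
barycentre of that conditional law is `E[Z | Y'] = Y'`, evaluated at `Y ω`, so conditioning `z`
first on `ω` gives `Y`, and then on `X` gives `E[Y | X] = X`. If `Z` is not integrable, the
conditional expectations are the junk value `0`, which forces `Y'`, `Y` and then `X` to vanish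
almost surely, and the glued coupling is still a witness. -/

theorem snd_compProd_comap_condDistrib {Ω Ω' E F : Type*} {mΩ : MeasurableSpace Ω}
    {mΩ' : MeasurableSpace Ω'} [MeasurableSpace E] [StandardBorelSpace E] [Nonempty E]
    [MeasurableSpace F] {P : Measure Ω} [SFinite P] {P' : Measure Ω'} [IsFiniteMeasure P']
    {Y : Ω → F} {Y' : Ω' → F} {Z : Ω' → E} (hY : Measurable Y) (hY' : AEMeasurable Y' P')
    (hZ : AEMeasurable Z P') (hlaw : P.map Y = P'.map Y') :
    (P ⊗ₘ (condDistrib Z Y' P').comap Y hY).snd = P'.map Z := by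
  rw [Measure.snd_compProd, ← Kernel.comp_deterministic_eq_comap, ← Measure.comp_assoc,
    Measure.deterministic_comp_eq_map, hlaw, condDistrib_comp_map hY' hZ]

section

variable {Ω Ω' E : Type*} {m mΩ : MeasurableSpace Ω} {mΩ' : MeasurableSpace Ω'}
  [NormedAddCommGroup E] [NormedSpace ℝ E] [CompleteSpace E]

theorem ae_eq_zero_of_condExp_ae_eq_of_ae_eq_zero {P : Measure Ω} {X Y : Ω → E}
    (hXY : P[Y | m] =ᵐ[P] X) (hY : Y =ᵐ[P] 0) : X =ᵐ[P] 0 :=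
  hXY.symm.trans <| (condExp_congr_ae hY).trans <| by rw [condExp_zero]

variable [MeasurableSpace E]

theorem condExp_snd_compProd_comap_fst_ae_eq {P : Measure Ω} [IsFiniteMeasure P]
    {κ : Kernel Ω E} [IsMarkovKernel κ] (hm : m ≤ mΩ) (hint : Integrable Prod.snd (P ⊗ₘ κ)) :
    (P ⊗ₘ κ)[Prod.snd | m.comap Prod.fst] =ᵐ[P ⊗ₘ κ] P[fun ω ↦ ∫ z, z ∂κ ω | m] ∘ Prod.fst := by
  set g := P[fun ω ↦ ∫ z, z ∂κ ω | m]
  have hfst : (P ⊗ₘ κ).map Prod.fst = P := Measure.fst_compProd P κ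
  have hg_int : Integrable (g ∘ Prod.fst) (P ⊗ₘ κ) :=
    Integrable.comp_measurable (by rw [hfst]; exact integrable_condExp) measurable_fst
  refine (ae_eq_condExp_of_forall_setIntegral_eq
    ((MeasurableSpace.comap_mono hm).trans measurable_fst.comap_le) hint
    (fun _ _ _ ↦ hg_int.integrableOn) ?_ ?_).symm
  · rintro _ ⟨t, ht, rfl⟩ _
    calc ∫ p in Prod.fst ⁻¹' t, (g ∘ Prod.fst) p ∂(P ⊗ₘ κ)
        = ∫ ω in t, g ω ∂P := by
          have := setIntegral_map (μ := P ⊗ₘ κ) (f := g) (hm t ht)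
            (by rw [hfst]; exact integrable_condExp.aestronglyMeasurable)
            measurable_fst.aemeasurable
          rw [hfst] at this
          exact this.symm
      _ = ∫ ω in t, ∫ z, z ∂κ ω ∂P := setIntegral_condExp hm hint.integral_compProd ht
      _ = ∫ p in Prod.fst ⁻¹' t, p.2 ∂(P ⊗ₘ κ) := by
          rw [← Set.prod_univ, Measure.setIntegral_compProd (hm t ht) MeasurableSet.univ
            hint.integrableOn]
          simp only [Measure.restrict_univ]
  · exact (stronglyMeasurable_condExp.comp_measurable
      (Measurable.of_comap_le le_rfl)).aestronglyMeasurable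

variable [BorelSpace E] [SecondCountableTopology E]

theorem ae_integral_condDistrib_eq_self {P : Measure Ω} [IsFiniteMeasure P] {Y Z : Ω → E}
    (hY : Measurable Y) (hZ : Integrable Z P)
    (hYZ : P[Z | MeasurableSpace.comap Y inferInstance] =ᵐ[P] Y) :
    ∀ᵐ y ∂P.map Y, ∫ z, z ∂condDistrib Z Y P y = y :=
  (ae_map_iff hY.aemeasurable
    (measurableSet_eq_fun stronglyMeasurable_id.integral_kernel.measurable measurable_id)).2
    ((condExp_ae_eq_integral_condDistrib' hY hZ).symm.trans hYZ)

theorem condExp_snd_compProd_comap_condDistrib_ae_eq {P : Measure Ω} [IsFiniteMeasure P]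
    {P' : Measure Ω'} [IsFiniteMeasure P'] {X Y : Ω → E} {Y' Z : Ω' → E} (hX : Measurable X)
    (hY : Measurable Y) (hY' : Measurable Y') (hZ : Measurable Z) (hlaw : P.map Y = P'.map Y')
    (hYX : P[Y | MeasurableSpace.comap X inferInstance] =ᵐ[P] X)
    (hZY' : P'[Z | MeasurableSpace.comap Y' inferInstance] =ᵐ[P'] Y') :
    (P ⊗ₘ (condDistrib Z Y' P').comap Y hY)[Prod.snd |
        MeasurableSpace.comap (X ∘ Prod.fst) inferInstance]
      =ᵐ[P ⊗ₘ (condDistrib Z Y' P').comap Y hY] X ∘ Prod.fst := by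
  set π := P ⊗ₘ (condDistrib Z Y' P').comap Y hY
  have hπfst : π.map Prod.fst = P := Measure.fst_compProd _ _
  have hint : Integrable Prod.snd π ↔ Integrable Z P' :=
    (IdentDistrib.mk measurable_snd.aemeasurable hZ.aemeasurable
      (snd_compProd_comap_condDistrib hY hY'.aemeasurable hZ.aemeasurable hlaw)).integrable_iff
  rw [← MeasurableSpace.comap_comp]
  by_cases hZint : Integrable Z P'
  · have hbary : ∀ᵐ ω ∂P, ∫ z, z ∂condDistrib Z Y' P' (Y ω) = Y ω :=
      ae_of_ae_map hY.aemeasurable (hlaw ▸ ae_integral_condDistrib_eq_self hY' hZint hZY')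
    have hbary_condExp : P[fun ω ↦ ∫ z, z ∂condDistrib Z Y' P' (Y ω) |
        MeasurableSpace.comap X inferInstance] =ᵐ[π.map Prod.fst] X :=
      hπfst ▸ (condExp_congr_ae hbary).trans hYX
    exact (condExp_snd_compProd_comap_fst_ae_eq hX.comap_le (hint.2 hZint)).trans
      (ae_eq_comp measurable_fst.aemeasurable hbary_condExp)
  · have hY'0 : Y' =ᵐ[P'] 0 := hZY'.symm.trans (by rw [condExp_of_not_integrable hZint])
    have hY0 : Y =ᵐ[P] 0 := (IdentDistrib.mk hY'.aemeasurable hY.aemeasurable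
      hlaw.symm).ae_snd (measurableSet_singleton 0) hY'0
    have hX0 : X =ᵐ[π.map Prod.fst] 0 :=
      hπfst ▸ ae_eq_zero_of_condExp_ae_eq_of_ae_eq_zero hYX hY0
    rw [condExp_of_not_integrable (mt hint.1 hZint)]
    exact (ae_eq_comp measurable_fst.aemeasurable hX0).symm

end

theorem IsSpread.trans {E : Type} [NormedAddCommGroup E] [NormedSpace ℝ E] [CompleteSpace E]
    [MeasurableSpace E] [BorelSpace E] [SecondCountableTopology E] {μ ν ρ : Measure E}
    (hρν : IsSpread ρ ν) (hνμ : IsSpread ν μ) : IsSpread ρ μ := by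
  obtain ⟨Ω', _, P', _, Y', Z, hY', hZ, hY'law, hZlaw, hZY'⟩ := hρν
  obtain ⟨Ω, _, P, _, X, Y, hX, hY, hXlaw, hYlaw, hYX⟩ := hνμ
  have hlaw : P.map Y = P'.map Y' := hYlaw.trans hY'law.symm
  refine ⟨Ω × E, inferInstance, P ⊗ₘ (condDistrib Z Y' P').comap Y hY, inferInstance,
    X ∘ Prod.fst, Prod.snd, hX.comp measurable_fst, measurable_snd, ?_, ?_,
    condExp_snd_compProd_comap_condDistrib_ae_eq hX hY hY' hZ hlaw hYX hZY'⟩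
  · rw [← Measure.map_map hX measurable_fst, ← Measure.fst, Measure.fst_compProd, hXlaw]
  · rw [← Measure.snd, snd_compProd_comap_condDistrib hY hY'.aemeasurable hZ.aemeasurable hlaw,
      hZlaw]

theorem isSpread_trans_general {n : ℕ}
    (μX μY μZ : Measure (EuclideanSpace ℝ (Fin n)))
    (hZY : IsSpread μZ μY) (hYX : IsSpread μY μX) :
    IsSpread μZ μX :=
  hZY.trans hYX

theorem isSpread_trans {n : ℕ}
    (μX μY μZ : Measure (EuclideanSpace ℝ (Fin n)))
    [IsProbabilityMeasure μX] [IsProbabilityMeasure μY] [IsProbabilityMeasure μZ]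
    (hZY : IsSpread μZ μY) (hYX : IsSpread μY μX) :
    IsSpread μZ μX :=
  isSpread_trans_general μX μY μZ hZY hYX
end

section
/- Let X be a real-valued random variable with E[X] = 0 and |X| ≤ C almost surely. Then the Bernoulli distribution placing equal mass 1/2 on +C and -C is a spread of X. -/
/-!
Couple `X` with `Y ∈ {C, -C}` by drawing `Y = C` with probability `(C + X) / (2C)`, independently
of everything else given `X`. This weight makes the conditional mean of `Y` equal to `X`, and
since `E[X] = 0` it averages to `1/2`, so `Y` has the symmetric Bernoulli law. In general, composing
a law `μ` with a Markov kernel whose measures have barycenter the base point gives a spread of `μ`.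
-/

open MeasureTheory ProbabilityTheory

open Set unitInterval
open scoped ENNReal

theorem isSpread_comp_of_integral_eq_self {E : Type} [NormedAddCommGroup E] [NormedSpace ℝ E]
    [CompleteSpace E] [SecondCountableTopology E] [MeasurableSpace E] [BorelSpace E]
    (μ : Measure E) [IsProbabilityMeasure μ] (κ : Kernel E E) [IsMarkovKernel κ]
    (hμ : Integrable id μ) (hκμ : Integrable id (κ ∘ₘ μ)) (hκ : ∀ᵐ x ∂μ, ∫ y, y ∂κ x = x) :
    IsSpread (κ ∘ₘ μ) μ := by
  have h_fst : Integrable Prod.fst (μ ⊗ₘ κ) := by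
    rw [← Measure.fst_compProd μ κ] at hμ
    exact hμ.comp_measurable measurable_fst
  have h_snd : Integrable Prod.snd (μ ⊗ₘ κ) :=
    (Measure.integrable_compProd_snd_iff hκμ.aestronglyMeasurable).2 hκμ
  refine ⟨E × E, inferInstance, μ ⊗ₘ κ, inferInstance, Prod.fst, Prod.snd, measurable_fst,
    measurable_snd, Measure.fst_compProd μ κ, Measure.snd_compProd μ κ, ?_⟩
  refine (ae_eq_condExp_of_forall_setIntegral_eq measurable_fst.comap_le h_snd
    (fun s _ _ => h_fst.integrableOn) ?_ (comap_measurable Prod.fst).aestronglyMeasurable).symm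
  rintro _ ⟨A, hA, rfl⟩ _
  rw [← prod_univ, Measure.setIntegral_compProd hA .univ h_fst.integrableOn,
    Measure.setIntegral_compProd hA .univ h_snd.integrableOn]
  refine setIntegral_congr_ae hA ?_
  filter_upwards [hκ] with x hx _
  simp [hx]

lemma measurable_bernoulliMeasure {X : Type*} [MeasurableSpace X] (x y : X) :
    Measurable (fun p : I => Ber(x, y, p)) := by
  refine Measure.measurable_of_measurable_coe _ fun s hs => ?_
  classical
  simp_rw [bernoulliMeasure_apply _ hs]
  split_ifs <;> fun_prop

section UnitIntervalValued

variable {α : Type*} [MeasurableSpace α] {μ : Measure α} [IsFiniteMeasure μ] {f : α → I}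

lemma integrable_coe_unitInterval (hf : Measurable f) : Integrable (fun x => (f x : ℝ)) μ :=
  .of_bound (by fun_prop) 1 <| ae_of_all _ fun x => by
    rw [Real.norm_of_nonneg (f x).2.1]; exact (f x).2.2

lemma lintegral_toNNReal_unitInterval (hf : Measurable f) :
    ∫⁻ x, toNNReal (f x) ∂μ = ENNReal.ofReal (∫ x, (f x : ℝ) ∂μ) := by
  simp_rw [← ENNReal.ofReal_coe_nnreal, coe_toNNReal]
  exact (ofReal_integral_eq_lintegral_ofReal (integrable_coe_unitInterval hf)
    (ae_of_all _ fun x => (f x).2.1)).symm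

end UnitIntervalValued

section TwoPoint

/-- For `|x| ≤ C` this is the weight `p` with `p C + (1 - p) (-C) = x`; clamping it into `[0, 1]`
makes `twoPointKernel C` a Markov kernel on all of `ℝ`. -/
noncomputable def twoPointWeight (C x : ℝ) : I := projIcc 0 1 zero_le_one ((C + x) / (2 * C))

variable {C : ℝ}

lemma measurable_twoPointWeight : Measurable (twoPointWeight C) := by
  unfold twoPointWeight; fun_prop

noncomputable def twoPointKernel (C : ℝ) : Kernel ℝ ℝ where
  toFun x := Ber(C, -C, twoPointWeight C x)
  measurable' := (measurable_bernoulliMeasure C (-C)).comp measurable_twoPointWeight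

instance : IsMarkovKernel (twoPointKernel C) :=
  ⟨fun _ => inferInstanceAs (IsProbabilityMeasure Ber(_, _, _))⟩

lemma coe_twoPointWeight (hC : 0 < C) {x : ℝ} (hx : |x| ≤ C) :
    (twoPointWeight C x : ℝ) = (C + x) / (2 * C) := by
  rw [twoPointWeight, projIcc_of_mem]
  obtain ⟨h₁, h₂⟩ := abs_le.1 hx
  constructor
  · exact div_nonneg (by linarith) (by positivity)
  · rw [div_le_one (by positivity)]; linarith

lemma integral_twoPointKernel (hC : 0 < C) {x : ℝ} (hx : |x| ≤ C) :
    ∫ y, y ∂twoPointKernel C x = x := by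
  rw [twoPointKernel, Kernel.coe_mk, integral_bernoulliMeasure, coe_twoPointWeight hC hx,
    smul_eq_mul, smul_eq_mul]
  field_simp
  ring

lemma integral_twoPointWeight (hC : 0 < C) (μ : Measure ℝ) [IsProbabilityMeasure μ]
    (hbdd : ∀ᵐ x ∂μ, |x| ≤ C) (hmean : ∫ x, x ∂μ = 0) :
    ∫ x, (twoPointWeight C x : ℝ) ∂μ = 1 / 2 := by
  have hid : Integrable (fun x => x) μ := .of_bound aestronglyMeasurable_id C hbdd
  calc ∫ x, (twoPointWeight C x : ℝ) ∂μ = ∫ x, (C + x) / (2 * C) ∂μ :=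
        integral_congr_ae <| by filter_upwards [hbdd] with x hx using coe_twoPointWeight hC hx
    _ = 1 / 2 := by
        rw [integral_div, integral_add (integrable_const C) hid, integral_const, hmean]
        simp only [probReal_univ, smul_eq_mul, one_mul, add_zero, one_div]
        field_simp

lemma twoPointKernel_comp (hC : 0 < C) (μ : Measure ℝ) [IsProbabilityMeasure μ]
    (hbdd : ∀ᵐ x ∂μ, |x| ≤ C) (hmean : ∫ x, x ∂μ = 0) :
    twoPointKernel C ∘ₘ μ =
      (1/2 : ℝ≥0∞) • Measure.dirac C + (1/2 : ℝ≥0∞) • Measure.dirac (-C) := by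
  have hw := measurable_twoPointWeight (C := C)
  have h₁ : ∫⁻ x, toNNReal (twoPointWeight C x) ∂μ = 1 / 2 := by
    rw [lintegral_toNNReal_unitInterval hw, integral_twoPointWeight hC μ hbdd hmean,
      ENNReal.ofReal_div_of_pos two_pos]
    simp
  have h₂ : ∫⁻ x, toNNReal (σ (twoPointWeight C x)) ∂μ = 1 / 2 := by
    rw [lintegral_toNNReal_unitInterval (f := fun x => σ (twoPointWeight C x))
      (measurable_symm.comp hw)]
    simp_rw [coe_symm_eq]
    rw [integral_sub (integrable_const 1) (integrable_coe_unitInterval hw),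
      integral_twoPointWeight hC μ hbdd hmean]
    norm_num [ENNReal.ofReal_div_of_pos two_pos]
  ext s hs
  rw [Measure.bind_apply hs (Kernel.aemeasurable _)]
  simp only [twoPointKernel, Kernel.coe_mk, bernoulliMeasure_def, Measure.coe_add,
    Measure.coe_smul, Pi.add_apply, Pi.smul_apply, ENNReal.smul_def, smul_eq_mul]
  rw [lintegral_add_left (by fun_prop), lintegral_mul_const _ (by fun_prop),
    lintegral_mul_const _ (by fun_prop), h₁, h₂]

end TwoPoint

theorem bernoulli_isSpread_of_bounded
    {Ω : Type} [MeasurableSpace Ω] (P : Measure Ω) [IsProbabilityMeasure P]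
    (X : Ω → ℝ) (hX : Measurable X) (C : ℝ) (hC : 0 < C)
    (hmean : ∫ ω, X ω ∂P = 0) (hbdd : ∀ᵐ ω ∂P, |X ω| ≤ C) :
    IsSpread ((1/2 : ENNReal) • Measure.dirac C + (1/2 : ENNReal) • Measure.dirac (-C))
      (P.map X) := by
  have : IsProbabilityMeasure (P.map X) := Measure.isProbabilityMeasure_map hX.aemeasurable
  have hbdd' : ∀ᵐ x ∂P.map X, |x| ≤ C :=
    (ae_map_iff hX.aemeasurable (measurableSet_le (by fun_prop) measurable_const)).2 hbdd
  have hmean' : ∫ x, x ∂P.map X = 0 :=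
    (integral_map hX.aemeasurable aestronglyMeasurable_id).trans hmean
  have hν : Integrable id ((1/2 : ℝ≥0∞) • Measure.dirac C + (1/2 : ℝ≥0∞) • Measure.dirac (-C)) :=
    ((integrable_dirac (by simp)).smul_measure (by simp)).add_measure
      ((integrable_dirac (by simp)).smul_measure (by simp))
  rw [← twoPointKernel_comp hC _ hbdd' hmean'] at hν ⊢
  refine isSpread_comp_of_integral_eq_self _ _ (.of_bound aestronglyMeasurable_id C hbdd') hν ?_
  filter_upwards [hbdd'] with x hx using integral_twoPointKernel hC hx
end

section
/- Let X be a real-valued random variable with E[X] = 0 and |X| ≤ C almost surely. Then the Gaussian N(0, πC²/2) is a spread of X. -/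
/-!
Let `Z ∼ N(0, v)` and, given `X`, let `ε = ±1` be an independent sign with
`P(ε = 1 | X) = (1 + X / C) / 2`. Then `Y = ε |Z|` has conditional law a mixture of the laws of
`|Z|` and `-|Z|` whose weights average to `1/2` because `E[X] = 0`, so `Y ∼ N(0, v)` by the
symmetry of the Gaussian; and `E[Y | X] = (X / C) E|Z| = X` since `E|Z| = √(2v/π) = C` for
`v = πC²/2`.
-/

open MeasureTheory ProbabilityTheory

open Real Set unitInterval

lemma integral_Ioi_mul_exp_neg_mul_sq {b : ℝ} (hb : 0 < b) :
    ∫ r in Ioi (0 : ℝ), r * exp (-b * r ^ 2) = (2 * b)⁻¹ := by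
  have h := integral_mul_cexp_neg_mul_sq (b := (b : ℂ)) (by simpa)
  rw [← Complex.ofReal_inj, ← integral_complex_ofReal]
  push_cast
  exact h

lemma integral_abs_gaussianReal (v : NNReal) : ∫ x, |x| ∂gaussianReal 0 v = √(2 * v / π) := by
  rcases eq_or_ne v 0 with rfl | hv
  · simp [gaussianReal_zero_var]
  have hdensity : ∀ x, gaussianPDFReal 0 v x • |x|
      = (√(2 * π * v))⁻¹ * (|x| * exp (-(2 * v : ℝ)⁻¹ * |x| ^ 2)) := by
    intro x
    simp only [gaussianPDFReal, sub_zero, sq_abs, smul_eq_mul]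
    rw [neg_div, div_eq_inv_mul, neg_mul]
    ring
  rw [integral_gaussianReal_eq_integral_smul hv, integral_congr_ae (ae_of_all _ hdensity),
    integral_const_mul, integral_comp_abs (f := fun r => r * exp (-(2 * v : ℝ)⁻¹ * r ^ 2)),
    integral_Ioi_mul_exp_neg_mul_sq (by positivity), show 2 * π * v = π * (2 * v) by ring,
    sqrt_mul pi_pos.le, sqrt_div' _ pi_pos.le]
  field_simp
  rw [sq_sqrt (by positivity)]

lemma map_abs_add_map_neg_abs (ν : Measure ℝ) :
    ν.map (fun x => |x|) + ν.map (fun x => -|x|) = ν + ν.map (fun x => -x) := by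
  refine Measure.ext_of_lintegral _ fun f hf => ?_
  have hswap : ∀ x : ℝ, f |x| + f (-|x|) = f x + f (-x) := by
    intro x
    rcases le_or_gt 0 x with hx | hx
    · rw [abs_of_nonneg hx]
    · rw [abs_of_neg hx, neg_neg, add_comm]
  rw [lintegral_add_measure, lintegral_add_measure, lintegral_map hf (by fun_prop),
    lintegral_map hf (by fun_prop), lintegral_map hf (by fun_prop),
    ← lintegral_add_left (by fun_prop), ← lintegral_add_left hf]
  simp only [hswap]

/-- The law of `ε |Z|` for `Z ∼ ν` and an independent sign `ε` with `P(ε = 1) = t`. -/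
noncomputable def signedAbsKernel (ν : Measure ℝ) : Kernel I ℝ where
  toFun t :=
    ENNReal.ofReal t • ν.map (fun x => |x|) + ENNReal.ofReal (σ t) • ν.map (fun x => -|x|)
  measurable' := by
    refine Measure.measurable_of_measurable_coe _ fun s _ => ?_
    simp only [Measure.coe_add, Measure.coe_smul, Pi.add_apply, Pi.smul_apply, smul_eq_mul]
    fun_prop

lemma signedAbsKernel_apply (ν : Measure ℝ) (t : I) :
    signedAbsKernel ν t
      = ENNReal.ofReal t • ν.map (fun x => |x|) + ENNReal.ofReal (σ t) • ν.map (fun x => -|x|) :=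
  rfl

instance (ν : Measure ℝ) [IsProbabilityMeasure ν] : IsMarkovKernel (signedAbsKernel ν) := by
  refine ⟨fun t => ⟨?_⟩⟩
  rw [signedAbsKernel_apply, Measure.add_apply, Measure.smul_apply, Measure.smul_apply,
    Measure.map_apply (by fun_prop) .univ, Measure.map_apply (by fun_prop) .univ, preimage_univ,
    preimage_univ, measure_univ, smul_eq_mul, smul_eq_mul, mul_one, mul_one,
    ← ENNReal.ofReal_add t.2.1 (σ t).2.1, coe_symm_eq, add_sub_cancel, ENNReal.ofReal_one]

lemma integral_signedAbsKernel {ν : Measure ℝ} (hν : Integrable id ν) (t : I) :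
    ∫ y, y ∂signedAbsKernel ν t = (2 * t - 1) * ∫ x, |x| ∂ν := by
  have habs : Integrable (fun y => y) (ν.map fun x => |x|) :=
    (integrable_map_measure (by fun_prop) (by fun_prop)).mpr hν.abs
  have hnabs : Integrable (fun y => y) (ν.map fun x => -|x|) :=
    (integrable_map_measure (by fun_prop) (by fun_prop)).mpr hν.abs.neg
  rw [signedAbsKernel_apply, integral_add_measure (habs.smul_measure ENNReal.ofReal_ne_top)
      (hnabs.smul_measure ENNReal.ofReal_ne_top), integral_smul_measure, integral_smul_measure,
    integral_map (by fun_prop) (by fun_prop), integral_map (by fun_prop) (by fun_prop),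
    integral_neg, ENNReal.toReal_ofReal t.2.1, ENNReal.toReal_ofReal (σ t).2.1, coe_symm_eq]
  simp only [smul_eq_mul]
  ring

lemma comap_signedAbsKernel_comp {α : Type*} [MeasurableSpace α] {μ : Measure α}
    [IsProbabilityMeasure μ] {ν : Measure ℝ} (hν : ν.map (fun x => -x) = ν)
    {p : α → I} (hp : Measurable p) (hmean : ∫ x, (p x : ℝ) ∂μ = 1 / 2) :
    (signedAbsKernel ν).comap p hp ∘ₘ μ = ν := by
  have hint : Integrable (fun x => (p x : ℝ)) μ := .of_bound (by fun_prop) 1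
    (ae_of_all _ fun x => by simpa [abs_of_nonneg (p x).2.1] using (p x).2.2)
  have hlint : ∫⁻ x, ENNReal.ofReal (p x) ∂μ = ENNReal.ofReal (1 / 2) := by
    rw [← ofReal_integral_eq_lintegral_ofReal hint (ae_of_all _ fun x => (p x).2.1), hmean]
  have hlint_symm : ∫⁻ x, ENNReal.ofReal (σ (p x)) ∂μ = ENNReal.ofReal (1 / 2) := by
    simp only [coe_symm_eq]
    rw [← ofReal_integral_eq_lintegral_ofReal (f := fun x => 1 - (p x : ℝ))
      ((integrable_const 1).sub hint) (ae_of_all _ fun x => (σ (p x)).2.1),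
      integral_sub (integrable_const 1) hint, hmean]
    norm_num
  have hsymm := map_abs_add_map_neg_abs ν
  rw [hν] at hsymm
  ext s hs
  rw [Measure.bind_apply hs (Kernel.aemeasurable _)]
  simp only [Kernel.comap_apply, signedAbsKernel_apply, Measure.coe_add, Measure.coe_smul,
    Pi.add_apply, Pi.smul_apply, smul_eq_mul]
  rw [lintegral_add_left (by fun_prop), lintegral_mul_const _ (by fun_prop),
    lintegral_mul_const _ (by fun_prop), hlint, hlint_symm, ← mul_add, ← Measure.add_apply,
    hsymm, Measure.add_apply, ← two_mul, ← mul_assoc, ← ENNReal.ofReal_ofNat 2,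
    ← ENNReal.ofReal_mul (by norm_num)]
  norm_num

theorem isSpread_comp {E : Type} [NormedAddCommGroup E] [NormedSpace ℝ E] [CompleteSpace E]
    [MeasurableSpace E] [BorelSpace E] [SecondCountableTopology E]
    (μ : Measure E) [IsProbabilityMeasure μ] (κ : Kernel E E) [IsMarkovKernel κ]
    (hint : Integrable id (κ ∘ₘ μ)) (hmean : ∀ᵐ x ∂μ, ∫ y, y ∂κ x = x) :
    IsSpread (κ ∘ₘ μ) μ := by
  refine ⟨E × E, inferInstance, μ ⊗ₘ κ, inferInstance, Prod.fst, Prod.snd, measurable_fst,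
    measurable_snd, Measure.fst_compProd μ κ, Measure.snd_compProd μ κ, ?_⟩
  have hsnd : Integrable Prod.snd (μ ⊗ₘ κ) := by
    rw [← Measure.snd_compProd μ κ, Measure.snd] at hint
    exact (integrable_map_measure (f := Prod.snd) (by fun_prop) (by fun_prop)).mp hint
  have hcond : condDistrib Prod.snd Prod.fst (μ ⊗ₘ κ) =ᵐ[μ] κ := by
    have h := condDistrib_ae_eq_of_measure_eq_compProd_of_measurable (κ := κ) measurable_fst
      measurable_snd (μ := μ ⊗ₘ κ) (by rw [Measure.map_id', ← Measure.fst, Measure.fst_compProd])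
    rwa [← Measure.fst, Measure.fst_compProd] at h
  have hfst : ∀ {q : E → Prop}, (∀ᵐ x ∂μ, q x) → ∀ᵐ a ∂(μ ⊗ₘ κ), q a.1 := fun h =>
    ae_of_ae_map measurable_fst.aemeasurable (by rwa [← Measure.fst, Measure.fst_compProd])
  filter_upwards [condExp_ae_eq_integral_condDistrib' measurable_fst hsnd, hfst hcond,
    hfst hmean] with a h1 h2 h3
  rw [h1, h2, h3]

theorem isSpread_of_abs_le_integral_abs {μ ν : Measure ℝ} [IsProbabilityMeasure μ]
    [IsProbabilityMeasure ν] (hν : ν.map (fun x => -x) = ν) (hν_int : Integrable id ν)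
    (hμ : ∫ x, x ∂μ = 0) (hbdd : ∀ᵐ x ∂μ, |x| ≤ ∫ y, |y| ∂ν) : IsSpread ν μ := by
  set C := ∫ y, |y| ∂ν
  have hC : 0 ≤ C := integral_nonneg fun _ => abs_nonneg _
  -- the clamping to `[0, 1]` only matters off the support of `μ`
  set p : ℝ → I := fun x => projIcc 0 1 zero_le_one ((1 + x / C) / 2)
  have hp : Measurable p := continuous_projIcc.measurable.comp (by fun_prop)
  have hpx : ∀ᵐ x ∂μ, (p x : ℝ) = (1 + x / C) / 2 := by
    filter_upwards [hbdd] with x hx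
    have hxC : |x / C| ≤ 1 := by rw [abs_div, abs_of_nonneg hC]; exact div_le_one_of_le₀ hx hC
    obtain ⟨hlo, hhi⟩ := abs_le.mp hxC
    exact congrArg Subtype.val (projIcc_of_mem _ ⟨by linarith, by linarith⟩)
  have hp_mean : ∫ x, (p x : ℝ) ∂μ = 1 / 2 := by
    have hμ_int : Integrable (fun x => x) μ := .of_bound (by fun_prop) C hbdd
    rw [integral_congr_ae hpx, integral_div, integral_add (integrable_const 1)
      (hμ_int.div_const C), integral_div, hμ]
    simp
  have hlaw := comap_signedAbsKernel_comp hν hp hp_mean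
  rw [← hlaw]
  refine isSpread_comp _ _ (by rwa [hlaw]) ?_
  filter_upwards [hpx, hbdd] with x hpx hx
  rw [Kernel.comap_apply, integral_signedAbsKernel hν_int, hpx]
  rcases eq_or_ne C 0 with hC0 | hC0
  · rw [hC0] at hx ⊢
    simpa using (abs_nonpos_iff.mp hx).symm
  · field_simp
    ring

theorem gaussian_isSpread_of_bounded
    {Ω : Type} [MeasurableSpace Ω] (P : Measure Ω) [IsProbabilityMeasure P]
    (X : Ω → ℝ) (hX : Measurable X) (C : ℝ) (hC : 0 < C)
    (hmean : ∫ ω, X ω ∂P = 0) (hbdd : ∀ᵐ ω ∂P, |X ω| ≤ C) :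
    IsSpread (gaussianReal 0 (Real.toNNReal (Real.pi * C ^ 2 / 2))) (P.map X) := by
  have := Measure.isProbabilityMeasure_map (μ := P) hX.aemeasurable
  have habs : ∫ y, |y| ∂gaussianReal 0 (Real.toNNReal (π * C ^ 2 / 2)) = C := by
    rw [integral_abs_gaussianReal, Real.coe_toNNReal _ (by positivity),
      show 2 * (π * C ^ 2 / 2) / π = C ^ 2 by field_simp, sqrt_sq hC.le]
  refine isSpread_of_abs_le_integral_abs (by simpa using gaussianReal_map_neg (μ := 0))
    IsGaussian.integrable_id ?_ ?_
  · rwa [integral_map hX.aemeasurable (by fun_prop)]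
  · rw [habs]
    exact (ae_map_iff hX.aemeasurable (measurableSet_le (by fun_prop) (by fun_prop))).mpr hbdd
end

section
/- Let M be an n×n positive semidefinite matrix with M ⪯ LcI, where c ≥ 1 and L ≥ 0 are reals. Then for any vector v ∈ ℝⁿ with ‖v‖₂ ≤ 1, the matrix M' = (I - c⁻¹vvᵀ)M(I - c⁻¹vvᵀ) + Lvvᵀ satisfies 0 ⪯ M' ⪯ LcI. -/
/-!
Write `W = v vᵀ` and `P = I - c⁻¹ W`. Both `P M P` and `L W` are positive semidefinite, which gives
the lower bound. For the upper bound, `W² = ‖v‖² W` yields the identity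
`L c I - (P M P + L W) = P (L c I - M) P + L (1 - c⁻¹ ‖v‖²) W`,
whose right-hand side is a congruence of a positive semidefinite matrix plus a nonnegative multiple
of `W`, because `c ≥ 1` and `‖v‖ ≤ 1`.
-/

open Matrix

namespace Matrix

variable {ι : Type*} [Fintype ι]

theorem vecMulVec_self_mul_self {R : Type*} [CommSemiring R] (v : ι → R) :
    vecMulVec v v * vecMulVec v v = (v ⬝ᵥ v) • vecMulVec v v := by
  rw [vecMulVec_mul_vecMulVec, vecMulVec_smul]

theorem posSemidef_vecMulVec_self (v : ι → ℝ) : (vecMulVec v v).PosSemidef := by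
  simpa using posSemidef_vecMulVec_self_star v

theorem isHermitian_vecMulVec_self (v : ι → ℝ) : (vecMulVec v v).IsHermitian :=
  (posSemidef_vecMulVec_self v).isHermitian

theorem PosSemidef.mul_mul_self_of_isHermitian {A P : Matrix ι ι ℝ} (hA : A.PosSemidef)
    (hP : P.IsHermitian) : (P * A * P).PosSemidef := by
  simpa only [hP.eq] using hA.conjTranspose_mul_mul_same P

variable [DecidableEq ι]

theorem smul_one_sub_conj_add_smul_vecMulVec {K : Type*} [Field K] (M : Matrix ι ι K) (v : ι → K)
    {L c : K} (hc : c ≠ 0) :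
    (L * c) • (1 : Matrix ι ι K)
        - ((1 - c⁻¹ • vecMulVec v v) * M * (1 - c⁻¹ • vecMulVec v v) + L • vecMulVec v v) =
      (1 - c⁻¹ • vecMulVec v v) * ((L * c) • 1 - M) * (1 - c⁻¹ • vecMulVec v v)
        + (L * (1 - c⁻¹ * (v ⬝ᵥ v))) • vecMulVec v v := by
  simp only [mul_sub, sub_mul, smul_mul_assoc, mul_smul_comm, mul_one, one_mul, smul_sub,
    smul_smul, vecMulVec_self_mul_self]
  match_scalars <;> field_simp; ring

end Matrix

theorem covar_update_psd_le {n : ℕ}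
    (M : Matrix (Fin n) (Fin n) ℝ) (L c : ℝ) (hc : 1 ≤ c) (hL : 0 ≤ L)
    (hM : M.PosSemidef) (hMle : ((L * c) • (1 : Matrix (Fin n) (Fin n) ℝ) - M).PosSemidef)
    (v : Fin n → ℝ) (hv : ∑ i, v i ^ 2 ≤ 1) :
    ((1 - c⁻¹ • vecMulVec v v) * M * (1 - c⁻¹ • vecMulVec v v)
        + L • vecMulVec v v).PosSemidef ∧
      ((L * c) • (1 : Matrix (Fin n) (Fin n) ℝ)
        - ((1 - c⁻¹ • vecMulVec v v) * M * (1 - c⁻¹ • vecMulVec v v)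
          + L • vecMulVec v v)).PosSemidef := by
  have hW := posSemidef_vecMulVec_self v
  have hP : (1 - c⁻¹ • vecMulVec v v).IsHermitian :=
    isHermitian_one.sub ((isHermitian_vecMulVec_self v).smul (IsSelfAdjoint.all c⁻¹))
  have hcoef : 0 ≤ L * (1 - c⁻¹ * (v ⬝ᵥ v)) := by
    have hvv : v ⬝ᵥ v ≤ 1 := by simpa only [dotProduct, sq] using hv
    have hvv₀ : 0 ≤ v ⬝ᵥ v := by simpa using dotProduct_self_star_nonneg v
    exact mul_nonneg hL (sub_nonneg.mpr (mul_le_one₀ (inv_le_one_of_one_le₀ hc) hvv₀ hvv))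
  refine ⟨(hM.mul_mul_self_of_isHermitian hP).add (hW.smul hL), ?_⟩
  rw [smul_one_sub_conj_add_smul_vecMulVec M v (by positivity)]
  exact (hMle.mul_mul_self_of_isHermitian hP).add (hW.smul hcoef)
end
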